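/- Let k be a field and let A be a metabelian Lie algebra over k generated as a Lie algebra by n elements s₁, …, sₙ. Then: (i) the quotient k-vector space A / ⁅A, A⁆ is finite-dimensional, of dimension r ≤ n; and (ii) if a₁, …, a_r ∈ A are elements whose images form a basis of A / ⁅A, A⁆, then the derived ideal ⁅A, A⁆, viewed as a module over R = MvPolynomial (Fin r) k via evaluating polynomials at the pairwise commuting k-linear endomorphisms b ↦ ⁅b, aᵢ⁆ of ⁅A, A⁆ (well defined because A is metabelian, so ⁅A, A⁆ is an abelian ideal), is a finitely generated R-module. -/

import Mathlib

/-- A Lie ring `A` is *metabelian* if `⁅⁅a,b⁆,⁅c,d⁆⁆ = 0` for all `a b c d`. -/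
def IsMetabelian (A : Type*) [LieRing A] : Prop :=
  ∀ a b c d : A, ⁅⁅a, b⁆, ⁅c, d⁆⁆ = 0

/-!
A subspace `B` of `A` with `⁅B, B⁆ ⊆ B` is a Lie subalgebra, so it is all of `A` as soon as it
contains the generators `sₜ`. For (i), `span {sₜ} + ⁅A, A⁆` is such a subspace, so the images of
the `sₜ` span `A/⁅A, A⁆`. For (ii), write `sₜ = pₜ + uₜ` with `pₜ ∈ span {aᵢ}` and `uₜ ∈ ⁅A, A⁆`,
and let `N ⊆ ⁅A, A⁆` be the `R`-submodule generated by the `uₜ` and the `⁅aᵢ, aⱼ⁆`. As `N` is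
stable under `ad aᵢ` and abelian, `B = span {aᵢ} + N` satisfies `⁅B, B⁆ ⊆ N`; it contains the
generators, so `B = A` and `⁅A, A⁆ = ⁅B, B⁆ ⊆ N`.
-/

open Set Submodule LieAlgebra

section

variable {k A : Type*} [Field k] [LieRing A] [LieAlgebra k A]

theorem lie_mem_of_mem_span {T : Set A} {N : Submodule k A}
    (hT : ∀ x ∈ T, ∀ y ∈ T, ⁅x, y⁆ ∈ N) {x y : A} (hx : x ∈ span k T) (hy : y ∈ span k T) :
    ⁅x, y⁆ ∈ N := by
  have hxy := apply_mem_map₂ (LieAlgebra.ad k A : A →ₗ[k] Module.End k A) hx hy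
  rw [map₂_span_span] at hxy
  refine span_le.mpr ?_ hxy
  rintro _ ⟨x, hx, y, hy, rfl⟩
  exact hT x hx y hy

theorem derivedSeries_one_toSubmodule :
    (derivedSeries k A 1).toSubmodule = span k {m | ∃ x y : A, ⁅x, y⁆ = m} := by
  rw [derivedSeries_def, derivedSeriesOfIdeal_succ, derivedSeriesOfIdeal_zero,
    LieSubmodule.lieIdeal_oper_eq_linear_span']
  simp

theorem lie_mem_derivedSeries_one (x y : A) : ⁅x, y⁆ ∈ derivedSeries k A 1 := by
  rw [← LieSubmodule.mem_toSubmodule, derivedSeries_one_toSubmodule]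
  exact subset_span ⟨x, y, rfl⟩

theorem derivedSeries_one_le_of_lie_mem {N : Submodule k A} (h : ∀ x y : A, ⁅x, y⁆ ∈ N) :
    (derivedSeries k A 1).toSubmodule ≤ N := by
  rw [derivedSeries_one_toSubmodule, span_le]
  rintro _ ⟨x, y, rfl⟩
  exact h x y

theorem IsMetabelian.lie_eq_zero (hA : IsMetabelian A) {x y : A}
    (hx : x ∈ derivedSeries k A 1) (hy : y ∈ derivedSeries k A 1) : ⁅x, y⁆ = 0 := by
  rw [← LieSubmodule.mem_toSubmodule, derivedSeries_one_toSubmodule] at hx hy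
  refine (mem_bot k).mp (lie_mem_of_mem_span ?_ hx hy)
  rintro _ ⟨a, b, rfl⟩ _ ⟨c, d, rfl⟩
  exact (mem_bot k).mpr (hA a b c d)

theorem Submodule.eq_top_of_lie_mem_of_lieSpan_eq_top {ι : Type*} {s : ι → A}
    (hgen : LieSubalgebra.lieSpan k A (range s) = ⊤) {B : Submodule k A}
    (hB : ∀ x ∈ B, ∀ y ∈ B, ⁅x, y⁆ ∈ B) (hs : ∀ i, s i ∈ B) : B = ⊤ := by
  let L : LieSubalgebra k A := { B with lie_mem' := fun hx hy => hB _ hx _ hy }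
  have hL : L = ⊤ := top_unique <| hgen ▸ LieSubalgebra.lieSpan_le.mpr (range_subset_iff.mpr hs)
  exact (LieSubalgebra.toSubmodule_eq_top L).mpr hL

theorem span_range_mk_eq_top_of_lieSpan_eq_top {ι : Type*} {s : ι → A}
    (hgen : LieSubalgebra.lieSpan k A (range s) = ⊤) :
    span k (range fun i => LieSubmodule.Quotient.mk' (derivedSeries k A 1) (s i)) = ⊤ := by
  change span k (range ((derivedSeries k A 1).toSubmodule.mkQ ∘ s)) = ⊤
  rw [range_comp, ← map_span, map_mkQ_eq_top]
  refine eq_top_of_lie_mem_of_lieSpan_eq_top hgen (fun x _ y _ => ?_) fun i => ?_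
  · exact mem_sup_left (lie_mem_derivedSeries_one x y)
  · exact mem_sup_right (subset_span (mem_range_self i))

theorem derivedSeries_one_le_of_lie_mem_sup_span {ι ι' : Type*} {s : ι' → A}
    (hgen : LieSubalgebra.lieSpan k A (range s) = ⊤) (a : ι → A) {N : Submodule k A}
    (hNN : ∀ x ∈ N, ∀ y ∈ N, ⁅x, y⁆ ∈ N) (hNa : ∀ i, ∀ x ∈ N, ⁅x, a i⁆ ∈ N)
    (haa : ∀ i j, ⁅a i, a j⁆ ∈ N) (hs : ∀ t, s t ∈ span k (range a) ⊔ N) :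
    (derivedSeries k A 1).toSubmodule ≤ N := by
  have hT : ∀ x ∈ range a ∪ N, ∀ y ∈ range a ∪ N, ⁅x, y⁆ ∈ N := by
    rintro _ (⟨i, rfl⟩ | hx) _ (⟨j, rfl⟩ | hy)
    · exact haa i j
    · rw [← lie_skew]
      exact N.neg_mem (hNa i _ hy)
    · exact hNa j _ hx
    · exact hNN _ hx _ hy
  have hB : span k (range a ∪ N) = ⊤ := by
    refine eq_top_of_lie_mem_of_lieSpan_eq_top hgen
      (fun x hx y hy => subset_span (Or.inr (lie_mem_of_mem_span hT hx hy))) fun t => ?_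
    rw [span_union, span_eq]
    exact hs t
  exact derivedSeries_one_le_of_lie_mem fun x y =>
    lie_mem_of_mem_span hT (hB ▸ mem_top) (hB ▸ mem_top)

theorem IsMetabelian.finite_derivedSeries_one {ι ι' R : Type*} [Finite ι] [Finite ι']
    [Semiring R] [Algebra k R] [Module R (derivedSeries k A 1)]
    [IsScalarTower k R (derivedSeries k A 1)] (hA : IsMetabelian A) {s : ι' → A}
    (hgen : LieSubalgebra.lieSpan k A (range s) = ⊤) (a : ι → A)
    (ha : span k (range a) ⊔ (derivedSeries k A 1).toSubmodule = ⊤) (X : ι → R)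
    (hX : ∀ i (b : derivedSeries k A 1), ((X i • b : derivedSeries k A 1) : A) = ⁅(b : A), a i⁆) :
    Module.Finite R (derivedSeries k A 1) := by
  choose p hp u hu hpu using fun t => mem_sup.mp (ha ▸ mem_top : s t ∈ _)
  let S : Set (derivedSeries k A 1) := range (fun t => ⟨u t, hu t⟩) ∪
    range fun ij : ι × ι => ⟨⁅a ij.1, a ij.2⁆, lie_mem_derivedSeries_one _ _⟩
  let N : Submodule k A :=
    ((span R S).restrictScalars k).map (derivedSeries k A 1).toSubmodule.subtype
  have hND : N ≤ (derivedSeries k A 1).toSubmodule := by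
    rintro _ ⟨m, -, rfl⟩
    exact m.2
  have hD : (derivedSeries k A 1).toSubmodule ≤ N := by
    refine derivedSeries_one_le_of_lie_mem_sup_span hgen a (fun x hx y hy => ?_) ?_ ?_ ?_
    · rw [hA.lie_eq_zero (hND hx) (hND hy)]
      exact N.zero_mem
    · rintro i _ ⟨m, hm, rfl⟩
      exact ⟨X i • m, (span R S).smul_mem _ hm, hX i m⟩
    · exact fun i j => ⟨_, subset_span (Or.inr ⟨(i, j), rfl⟩), rfl⟩
    · intro t
      rw [← hpu t]
      exact add_mem_sup (hp t) ⟨_, subset_span (Or.inl ⟨t, rfl⟩), rfl⟩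
  refine ⟨fg_def.mpr ⟨S, (finite_range _).union (finite_range _), eq_top_iff.mpr fun m _ => ?_⟩⟩
  obtain ⟨m', hm', hm'm⟩ := hD m.2
  rwa [← Subtype.ext hm'm]

end

/-- For a metabelian Lie algebra `A` generated by `n` elements: (i) `A/⁅A,A⁆` is a
finite-dimensional vector space of dimension at most `n`, and (ii) the derived ideal
`⁅A,A⁆`, as a module over `R = MvPolynomial (Fin r) k` via bracketing with preimages of a
basis of `A/⁅A,A⁆`, is a finitely generated `R`-module. -/
theorem derived_fg_module_of_fg_metabelian {k A : Type*} [Field k] [LieRing A]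
    [LieAlgebra k A] (hA : IsMetabelian A) (n : ℕ) (s : Fin n → A)
    (hgen : LieSubalgebra.lieSpan k A (Set.range s) = ⊤) :
    (FiniteDimensional k (A ⧸ LieAlgebra.derivedSeries k A 1) ∧
      Module.finrank k (A ⧸ LieAlgebra.derivedSeries k A 1) ≤ n) ∧
    (∀ (r : ℕ) (a : Fin r → A)
      (bas : Module.Basis (Fin r) k (A ⧸ LieAlgebra.derivedSeries k A 1)),
      (∀ i, bas i = LieSubmodule.Quotient.mk' (LieAlgebra.derivedSeries k A 1) (a i)) →
      ∀ [inst : Module (MvPolynomial (Fin r) k) ↥(LieAlgebra.derivedSeries k A 1)],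
      (∀ (i : Fin r) (b : ↥(LieAlgebra.derivedSeries k A 1)),
        (((MvPolynomial.X i : MvPolynomial (Fin r) k) • b : ↥(LieAlgebra.derivedSeries k A 1)) : A) = ⁅(b : A), a i⁆) →
      (∀ (c : k) (b : ↥(LieAlgebra.derivedSeries k A 1)),
        ((MvPolynomial.C c : MvPolynomial (Fin r) k) • b : ↥(LieAlgebra.derivedSeries k A 1)) = c • b) →
      Module.Finite (MvPolynomial (Fin r) k) ↥(LieAlgebra.derivedSeries k A 1)) := by
  have hspan := span_range_mk_eq_top_of_lieSpan_eq_top hgen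
  refine ⟨⟨⟨fg_def.mpr ⟨_, finite_range _, hspan⟩⟩, ?_⟩, ?_⟩
  · simpa using finrank_le_of_span_eq_top hspan
  · intro r a bas hbas _ hX hC
    have : IsScalarTower k (MvPolynomial (Fin r) k) (derivedSeries k A 1) :=
      .of_algebraMap_smul hC
    refine hA.finite_derivedSeries_one hgen a ?_ MvPolynomial.X hX
    have hmk : (derivedSeries k A 1).toSubmodule.mkQ ∘ a = bas := funext fun i => (hbas i).symm
    rw [sup_comm, ← map_mkQ_eq_top, map_span, ← range_comp, hmk, bas.span_eq]
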